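/- arXiv:2311.18781 — 2 statements merged into one kernel-verified Lean document; each statement's English description precedes it below -/
import Mathlib

section
/- Any category with families can be equipped with a telescope structure: defining the presheaf of telescopes over Γ as finite lists (A₁, A₂, …, A_n) of types with each A_{i+1} a type in the context extended by A₁,…,A_i (equivalently, Tel is the coproduct over n ∈ ℕ of the n-fold composite of the polynomial functor of the type/term projection applied appropriately), with partial substitutions the corresponding lists of terms, context extension by a telescope given by iterated context extension by types, the extension equations (Γ ∣ ⟨⟩) = Γ and (Γ ∣ (Θ, x:A)) = ((Γ ∣ Θ), x:A) hold, and concatenation of telescopes satisfies (Γ ∣ (Υ ∣ Φ)) = ((Γ ∣ Υ) ∣ Φ), (Υ ∣ ⟨⟩) = Υ, and (Υ ∣ (Φ, x:A)) = ((Υ ∣ Φ), x:A). -/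
open CategoryTheory

universe w₁ w₂ v u

/-- A category with families: a category of contexts with presheaves of types and
terms, and context comprehension `ext`/`pt`/`zv`/`extend` satisfying the laws
`pt ∘ [σ, t] = σ`, `zv[[σ, t]] = t` and `[pt ∘ τ, zv[τ]] = τ`. -/
structure CwFData (C : Type u) [Category.{v} C] where
  Ty : C → Type w₁
  tySub : ∀ {Δ Γ : C}, (Δ ⟶ Γ) → Ty Γ → Ty Δ
  tySub_id : ∀ {Γ : C} (A : Ty Γ), tySub (𝟙 Γ) A = A
  tySub_comp : ∀ {Θ Δ Γ : C} (τ : Θ ⟶ Δ) (σ : Δ ⟶ Γ) (A : Ty Γ),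
    tySub (τ ≫ σ) A = tySub τ (tySub σ A)
  Tm : ∀ Γ : C, Ty Γ → Type w₂
  tmSub : ∀ {Δ Γ : C} (σ : Δ ⟶ Γ) {A : Ty Γ}, Tm Γ A → Tm Δ (tySub σ A)
  tmSub_id : ∀ {Γ : C} {A : Ty Γ} (t : Tm Γ A), HEq (tmSub (𝟙 Γ) t) t
  tmSub_comp : ∀ {Θ Δ Γ : C} (τ : Θ ⟶ Δ) (σ : Δ ⟶ Γ) {A : Ty Γ} (t : Tm Γ A),
    HEq (tmSub (τ ≫ σ) t) (tmSub τ (tmSub σ t))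
  ext : ∀ Γ : C, Ty Γ → C
  pt : ∀ {Γ : C} (A : Ty Γ), ext Γ A ⟶ Γ
  zv : ∀ {Γ : C} (A : Ty Γ), Tm (ext Γ A) (tySub (pt A) A)
  extend : ∀ {Δ Γ : C} (σ : Δ ⟶ Γ) (A : Ty Γ), Tm Δ (tySub σ A) → (Δ ⟶ ext Γ A)
  pt_extend : ∀ {Δ Γ : C} (σ : Δ ⟶ Γ) (A : Ty Γ) (t : Tm Δ (tySub σ A)),
    extend σ A t ≫ pt A = σ
  zv_extend : ∀ {Δ Γ : C} (σ : Δ ⟶ Γ) (A : Ty Γ) (t : Tm Δ (tySub σ A)),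
    HEq (tmSub (extend σ A t) (zv A)) t
  extend_eta : ∀ {Δ Γ : C} (A : Ty Γ) (τ : Δ ⟶ ext Γ A),
    extend (τ ≫ pt A) A
      (cast (congrArg (Tm Δ) (tySub_comp τ (pt A) A)).symm (tmSub τ (zv A))) = τ

/-- A telescope structure on a CwF: a presheaf of telescopes with the empty telescope,
extension of telescopes by types, context extension by telescopes, concatenation of
telescopes, and partial substitutions given by lists of terms, satisfying the
strict equations of the paper. -/
structure TelStr {C : Type u} [Category.{v} C] (M : CwFData.{w₁, w₂} C) where
  Tel : C → Type w₁
  telSub : ∀ {Δ Γ : C}, (Δ ⟶ Γ) → Tel Γ → Tel Δ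
  telSub_id : ∀ {Γ : C} (Θ : Tel Γ), telSub (𝟙 Γ) Θ = Θ
  telSub_comp : ∀ {Ξ Δ Γ : C} (τ : Ξ ⟶ Δ) (σ : Δ ⟶ Γ) (Θ : Tel Γ),
    telSub (τ ≫ σ) Θ = telSub τ (telSub σ Θ)
  /-- the empty telescope `⟨⟩` -/
  nil : ∀ Γ : C, Tel Γ
  /-- context extension `(Γ ∣ Θ)` by a telescope -/
  extC : ∀ Γ : C, Tel Γ → C
  /-- `(Γ ∣ ⟨⟩) = Γ` -/
  ext_nil : ∀ Γ : C, extC Γ (nil Γ) = Γ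
  /-- extension `(Θ, x : A)` of a telescope by a type -/
  snoc : ∀ {Γ : C} (Θ : Tel Γ), M.Ty (extC Γ Θ) → Tel Γ
  /-- `(Γ ∣ (Θ, x : A)) = ((Γ ∣ Θ), x : A)` -/
  ext_snoc : ∀ {Γ : C} (Θ : Tel Γ) (A : M.Ty (extC Γ Θ)),
    extC Γ (snoc Θ A) = M.ext (extC Γ Θ) A
  /-- concatenation `(Υ ∣ Φ)` of telescopes -/
  concat : ∀ {Γ : C} (Θ : Tel Γ), Tel (extC Γ Θ) → Tel Γ
  /-- `(Γ ∣ (Υ ∣ Φ)) = ((Γ ∣ Υ) ∣ Φ)` -/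
  ext_concat : ∀ {Γ : C} (Θ : Tel Γ) (Φ : Tel (extC Γ Θ)),
    extC Γ (concat Θ Φ) = extC (extC Γ Θ) Φ
  /-- `(Υ ∣ ⟨⟩) = Υ` -/
  concat_nil : ∀ {Γ : C} (Θ : Tel Γ), concat Θ (nil (extC Γ Θ)) = Θ
  /-- `(Υ ∣ (Φ, x : A)) = ((Υ ∣ Φ), x : A)` -/
  concat_snoc : ∀ {Γ : C} (Θ : Tel Γ) (Φ : Tel (extC Γ Θ))
    (A : M.Ty (extC (extC Γ Θ) Φ)),
    concat Θ (snoc Φ A) =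
      snoc (concat Θ Φ) (cast (congrArg M.Ty (ext_concat Θ Φ)).symm A)
  /-- partial substitutions (elements of telescopes) -/
  PSub : ∀ {Γ : C}, Tel Γ → Type w₂
  /-- the substitution `Γ ⟶ (Γ ∣ Θ)` induced by a partial substitution -/
  toSub : ∀ {Γ : C} {Θ : Tel Γ}, PSub Θ → (Γ ⟶ extC Γ Θ)
  /-- the empty telescope has a unique partial substitution -/
  psub_nil : ∀ Γ : C, Unique (PSub (nil Γ))
  /-- partial substitutions into `(Θ, x : A)` are pairs of a partial substitution
  into `Θ` and a term of the correspondingly substituted type `A` -/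
  psub_snoc : ∀ {Γ : C} (Θ : Tel Γ) (A : M.Ty (extC Γ Θ)),
    PSub (snoc Θ A) ≃ (p : PSub Θ) × M.Tm Γ (M.tySub (toSub p) A)

namespace CwFTel

variable {C : Type u} [Category.{v} C] (M : CwFData.{w₁, w₂} C)

theorem psigma_ext {α : Sort*} {β : α → Sort*} {x y : PSigma β}
    (h1 : x.1 = y.1) (h2 : HEq x.2 y.2) : x = y := by
  obtain ⟨x1, x2⟩ := x
  obtain ⟨y1, y2⟩ := y
  cases h1
  cases h2
  rfl

/-- Weakening of a substitution by a type. -/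
def wk {Δ Γ : C} (q : Δ ⟶ Γ) (A : M.Ty Γ) : M.ext Δ (M.tySub q A) ⟶ M.ext Γ A :=
  M.extend (M.pt (M.tySub q A) ≫ q) A
    (cast (congrArg (M.Tm _) (M.tySub_comp (M.pt (M.tySub q A)) q A)).symm
      (M.zv (M.tySub q A)))

theorem extend_congr {Δ Γ : C} {σ σ' : Δ ⟶ Γ} {A : M.Ty Γ}
    {t : M.Tm Δ (M.tySub σ A)} {t' : M.Tm Δ (M.tySub σ' A)}
    (h : σ = σ') (h2 : HEq t t') : M.extend σ A t = M.extend σ' A t' := by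
  subst h
  rw [eq_of_heq h2]

theorem pt_congr {Γ : C} {A B : M.Ty Γ} (h : A = B) : HEq (M.pt A) (M.pt B) := by
  subst h; rfl

theorem zv_congr {Γ : C} {A B : M.Ty Γ} (h : A = B) : HEq (M.zv A) (M.zv B) := by
  subst h; rfl

theorem tmSub_congr {Δ Γ : C} (σ : Δ ⟶ Γ) {A A' : M.Ty Γ} {t : M.Tm Γ A}
    {t' : M.Tm Γ A'} (hA : A = A') (ht : HEq t t') :
    HEq (M.tmSub σ t) (M.tmSub σ t') := by
  subst hA
  rw [eq_of_heq ht]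

theorem wk_pt {Δ Γ : C} (q : Δ ⟶ Γ) (A : M.Ty Γ) :
    wk M q A ≫ M.pt A = M.pt (M.tySub q A) ≫ q :=
  M.pt_extend _ _ _

theorem wk_zv {Δ Γ : C} (q : Δ ⟶ Γ) (A : M.Ty Γ) :
    HEq (M.tmSub (wk M q A) (M.zv A)) (M.zv (M.tySub q A)) :=
  (M.zv_extend _ _ _).trans (cast_heq _ _)

theorem hom_ext_heq {X Y Γ : C} (A : M.Ty Γ) (f : X ⟶ M.ext Γ A) (g : Y ⟶ M.ext Γ A)
    (hXY : X = Y) (h1 : HEq (f ≫ M.pt A) (g ≫ M.pt A))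
    (h2 : HEq (M.tmSub f (M.zv A)) (M.tmSub g (M.zv A))) : HEq f g := by
  subst hXY
  apply heq_of_eq
  rw [← M.extend_eta A f, ← M.extend_eta A g]
  exact extend_congr M (by rw [eq_of_heq h1])
    ((cast_heq _ _).trans (h2.trans (cast_heq _ _).symm))

theorem comp_heq_left {X X' Y Z : C} (hX : X = X') {f : X ⟶ Y} {f' : X' ⟶ Y}
    (hf : HEq f f') (g : Y ⟶ Z) : HEq (f ≫ g) (f' ≫ g) := by
  subst hX
  rw [eq_of_heq hf]

theorem wk_id {Γ : C} (A : M.Ty Γ) : HEq (wk M (𝟙 Γ) A) (𝟙 (M.ext Γ A)) := by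
  apply hom_ext_heq M A _ _ (congrArg (M.ext Γ) (M.tySub_id A))
  · rw [wk_pt, Category.comp_id, Category.id_comp]
    exact pt_congr M (M.tySub_id A)
  · exact (wk_zv M (𝟙 Γ) A).trans
      ((zv_congr M (M.tySub_id A)).trans (M.tmSub_id (M.zv A)).symm)

theorem wk_comp {Ξ Δ Γ : C} (q1 : Ξ ⟶ Δ) (q2 : Δ ⟶ Γ) (A : M.Ty Γ) :
    HEq (wk M (q1 ≫ q2) A) (wk M q1 (M.tySub q2 A) ≫ wk M q2 A) := by
  have hty : M.tySub (q1 ≫ q2) A = M.tySub q1 (M.tySub q2 A) := M.tySub_comp q1 q2 A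
  apply hom_ext_heq M A _ _ (congrArg (M.ext Ξ) hty)
  · have hl : wk M (q1 ≫ q2) A ≫ M.pt A = M.pt (M.tySub (q1 ≫ q2) A) ≫ (q1 ≫ q2) :=
      wk_pt M (q1 ≫ q2) A
    have hr : (wk M q1 (M.tySub q2 A) ≫ wk M q2 A) ≫ M.pt A
        = M.pt (M.tySub q1 (M.tySub q2 A)) ≫ (q1 ≫ q2) := by
      rw [Category.assoc, wk_pt, ← Category.assoc, wk_pt, Category.assoc]
    rw [hl, hr]
    exact comp_heq_left (congrArg (M.ext Ξ) hty) (pt_congr M hty) (q1 ≫ q2)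
  · have htyB : M.tySub (wk M q2 A) (M.tySub (M.pt A) A)
        = M.tySub (M.pt (M.tySub q2 A)) (M.tySub q2 A) := by
      rw [← M.tySub_comp, wk_pt, M.tySub_comp]
    have e1 : HEq (M.tmSub (wk M (q1 ≫ q2) A) (M.zv A))
        (M.zv (M.tySub q1 (M.tySub q2 A))) :=
      (wk_zv M (q1 ≫ q2) A).trans (zv_congr M hty)
    have e2 : HEq (M.tmSub (wk M q1 (M.tySub q2 A) ≫ wk M q2 A) (M.zv A))
        (M.zv (M.tySub q1 (M.tySub q2 A))) :=
      (M.tmSub_comp _ _ _).trans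
        ((tmSub_congr M (wk M q1 (M.tySub q2 A)) htyB (wk_zv M q2 A)).trans
          (wk_zv M q1 (M.tySub q2 A)))
    exact e1.trans e2.symm

/-- Telescopes of length `n` over `Γ`, together with the iterated context
extension. -/
def TE : ℕ → C → Σ T : Type w₁, T → C
  | 0, Γ => ⟨PUnit, fun _ => Γ⟩
  | n + 1, Γ => ⟨(t : (TE n Γ).1) × M.Ty ((TE n Γ).2 t),
      fun p => M.ext ((TE n Γ).2 p.1) p.2⟩

/-- Substitution on telescopes of length `n`, together with the induced weakened
substitution between the extended contexts. -/
def Sb {Δ Γ : C} (σ : Δ ⟶ Γ) :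
    ∀ n, (t : (TE M n Γ).1) → Σ' t' : (TE M n Δ).1, ((TE M n Δ).2 t' ⟶ (TE M n Γ).2 t)
  | 0, _ => ⟨PUnit.unit, σ⟩
  | n + 1, p =>
    ⟨⟨(Sb σ n p.1).1, M.tySub (Sb σ n p.1).2 p.2⟩, wk M (Sb σ n p.1).2 p.2⟩

theorem Sb_id {Γ : C} : ∀ n (t : (TE M n Γ).1),
    Sb M (𝟙 Γ) n t = ⟨t, 𝟙 ((TE M n Γ).2 t)⟩
  | 0, _ => rfl
  | n + 1, p => by
    simp only [Sb]
    rw [Sb_id n p.1]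
    refine psigma_ext ?_ (wk_id M p.2)
    show (⟨p.1, M.tySub (𝟙 _) p.2⟩ : (TE M (n + 1) Γ).1) = p
    rw [M.tySub_id]
    rfl

theorem Sb_comp {Ξ Δ Γ : C} (τ : Ξ ⟶ Δ) (σ : Δ ⟶ Γ) : ∀ n (t : (TE M n Γ).1),
    Sb M (τ ≫ σ) n t
      = ⟨(Sb M τ n (Sb M σ n t).1).1, (Sb M τ n (Sb M σ n t).1).2 ≫ (Sb M σ n t).2⟩
  | 0, _ => rfl
  | n + 1, p => by
    simp only [Sb]
    rw [Sb_comp τ σ n p.1]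
    refine psigma_ext ?_
      (wk_comp M (Sb M τ n (Sb M σ n p.1).1).2 (Sb M σ n p.1).2 p.2)
    show (⟨(Sb M τ n (Sb M σ n p.1).1).1,
        M.tySub ((Sb M τ n (Sb M σ n p.1).1).2 ≫ (Sb M σ n p.1).2) p.2⟩
          : (TE M (n + 1) Ξ).1)
      = ⟨(Sb M τ n (Sb M σ n p.1).1).1,
        M.tySub (Sb M τ n (Sb M σ n p.1).1).2 (M.tySub (Sb M σ n p.1).2 p.2)⟩
    rw [M.tySub_comp]

theorem ext_cast {X Y : C} (h : X = Y) (A : M.Ty Y) :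
    M.ext X (cast (congrArg M.Ty h).symm A) = M.ext Y A := by
  subst h; rfl

/-- Concatenation of telescopes. -/
def catAux {Γ : C} (Θ : (n : ℕ) × (TE M n Γ).1) :
    ∀ n (t : (TE M n ((TE M Θ.1 Γ).2 Θ.2)).1),
      Σ' Ψ : (m : ℕ) × (TE M m Γ).1,
        (TE M Ψ.1 Γ).2 Ψ.2 = (TE M n ((TE M Θ.1 Γ).2 Θ.2)).2 t
  | 0, _ => ⟨Θ, rfl⟩
  | n + 1, p =>
    ⟨⟨(catAux Θ n p.1).1.1 + 1,
      ⟨(catAux Θ n p.1).1.2, cast (congrArg M.Ty (catAux Θ n p.1).2).symm p.2⟩⟩,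
      ext_cast M (catAux Θ n p.1).2 p.2⟩

/-- Partial substitutions into a telescope of length `n`, with the induced
substitution into the extended context. -/
def PAux {Γ : C} : ∀ n (t : (TE M n Γ).1),
    Σ' P : Type w₂, P → (Γ ⟶ (TE M n Γ).2 t)
  | 0, _ => ⟨PUnit, fun _ => 𝟙 Γ⟩
  | n + 1, p =>
    ⟨(q : (PAux n p.1).1) × M.Tm Γ (M.tySub ((PAux n p.1).2 q) p.2),
      fun q => M.extend ((PAux n p.1).2 q.1) p.2 q.2⟩

end CwFTel

/-- Any category with families can be equipped with telescopes:
taking telescopes to be finite lists of types (each in the context extended by the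
previous ones) and partial substitutions the corresponding lists of terms, with
context extension by a telescope given by iterated context extension by types,
all the extension and concatenation equations hold. -/
theorem cwf_has_telescopes {C : Type u} [Category.{v} C] (M : CwFData.{w₁, w₂} C) :
    Nonempty (TelStr M) := by
  refine ⟨{
    Tel := fun Γ => (n : ℕ) × (CwFTel.TE M n Γ).1
    telSub := fun σ Θ => ⟨Θ.1, (CwFTel.Sb M σ Θ.1 Θ.2).1⟩
    telSub_id := fun Θ => by simp only [CwFTel.Sb_id]
    telSub_comp := fun τ σ Θ => by simp only [CwFTel.Sb_comp]
    nil := fun _ => ⟨0, PUnit.unit⟩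
    extC := fun Γ Θ => (CwFTel.TE M Θ.1 Γ).2 Θ.2
    ext_nil := fun _ => rfl
    snoc := fun Θ A => ⟨Θ.1 + 1, ⟨Θ.2, A⟩⟩
    ext_snoc := fun _ _ => rfl
    concat := fun Θ Φ => (CwFTel.catAux M Θ Φ.1 Φ.2).1
    ext_concat := fun Θ Φ => (CwFTel.catAux M Θ Φ.1 Φ.2).2
    concat_nil := fun _ => rfl
    concat_snoc := fun _ _ _ => rfl
    PSub := fun Θ => (CwFTel.PAux M Θ.1 Θ.2).1
    toSub := fun {_ Θ} p => (CwFTel.PAux M Θ.1 Θ.2).2 p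
    psub_nil := fun _ => ⟨⟨PUnit.unit⟩, fun _ => rfl⟩
    psub_snoc := fun _ _ => Equiv.refl _ }⟩
end

section
/- In the category of telescopes over a fixed context (where fibrations are the morphisms isomorphic to dependent projections (Θ ∣ Υ) → Θ), the evens transformation from telescope décalage, with component at a telescope Θ equal to the projection (Θ^D) → Θ[key], is a Quillen pre-fibration: for any dependent projection (Θ ∣ Υ) → Θ, the Leibniz gap map of evens against it is isomorphic to the dependent projection (Θ^D ∣ Υ[key] ∣ Υ^d) → (Θ^D ∣ Υ[key]) and hence a fibration. -/
open CategoryTheory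

/-- In the category `S` of telescopes over a fixed context (with
fibrations the morphisms isomorphic to dependent projections `(Θ ∣ Υ) ⟶ Θ`), the
evens transformation `ev : (−)^D ⟶ (−)[key]` from telescope décalage (defined on the
category `D` of telescopes over the △□-locked context) is a Quillen pre-fibration:
given the structural computation rules for décalage, key-substitution and telescope
display on an extended telescope `(Θ ∣ Υ)`, the Leibniz gap map of `ev` against the
dependent projection `(Θ ∣ Υ) ⟶ Θ` is isomorphic to the dependent projection
`(Θ^D ∣ Υ[key] ∣ Υ^d) ⟶ (Θ^D ∣ Υ[key])`, hence a fibration. -/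
theorem evens_quillen_prefibration
    {S : Type*} [Category S] {D : Type*} [Category D]
    -- telescopes and their dependent projections in the codomain category `S`
    (TelS : S → Type*) (extS : ∀ X : S, TelS X → S)
    (projS : ∀ (X : S) (U : TelS X), extS X U ⟶ X)
    -- telescopes and their dependent projections in the domain category `D`
    (TelD : D → Type*) (extD : ∀ X : D, TelD X → D)
    (projD : ∀ (X : D) (U : TelD X), extD X U ⟶ X)
    -- décalage `(−)^D`, key-substitution `(−)[key]`, and the evens transformation
    (Dec Key : D ⥤ S) (ev : Dec ⟶ Key)
    -- key-substitution acts on telescopes, computing `Key` on extended telescopes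
    (keyTel : ∀ {Θ : D}, TelD Θ → TelS (Key.obj Θ))
    (hKeyObj : ∀ (Θ : D) (Υ : TelD Θ),
      Key.obj (extD Θ Υ) = extS (Key.obj Θ) (keyTel Υ))
    (hKeyMap : ∀ (Θ : D) (Υ : TelD Θ),
      Key.map (projD Θ Υ) = eqToHom (hKeyObj Θ Υ) ≫ projS _ (keyTel Υ))
    -- the telescope `Υ[key∘ev]` over `Θ^D`, the pullback of `Υ[key]` along `ev.app Θ`
    (evTel : ∀ {Θ : D}, TelD Θ → TelS (Dec.obj Θ))
    (sq : ∀ (Θ : D) (Υ : TelD Θ),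
      extS (Dec.obj Θ) (evTel Υ) ⟶ extS (Key.obj Θ) (keyTel Υ))
    (hsq : ∀ (Θ : D) (Υ : TelD Θ),
      IsPullback (sq Θ Υ) (projS _ (evTel Υ)) (projS _ (keyTel Υ)) (ev.app Θ))
    -- the displayed telescope `Υ^d`, computing `Dec` and `ev` on extended telescopes
    (dTel : ∀ {Θ : D} (Υ : TelD Θ), TelS (extS (Dec.obj Θ) (evTel Υ)))
    (hDecObj : ∀ (Θ : D) (Υ : TelD Θ),
      Dec.obj (extD Θ Υ) = extS (extS (Dec.obj Θ) (evTel Υ)) (dTel Υ))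
    (hDecMap : ∀ (Θ : D) (Υ : TelD Θ),
      Dec.map (projD Θ Υ) =
        eqToHom (hDecObj Θ Υ) ≫ projS _ (dTel Υ) ≫ projS _ (evTel Υ))
    (hEv : ∀ (Θ : D) (Υ : TelD Θ),
      ev.app (extD Θ Υ) =
        eqToHom (hDecObj Θ Υ) ≫ projS _ (dTel Υ) ≫ sq Θ Υ ≫
          eqToHom (hKeyObj Θ Υ).symm) :
    -- the Leibniz gap map of `ev` against any dependent projection is isomorphic to
    -- the dependent projection `(Θ^D ∣ Υ[key] ∣ Υ^d) ⟶ (Θ^D ∣ Υ[key])`, hence a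
    -- fibration:
    ∀ (Θ : D) (Υ : TelD Θ) (Pb : S) (p₁ : Pb ⟶ Dec.obj Θ)
      (p₂ : Pb ⟶ Key.obj (extD Θ Υ)),
      IsPullback p₁ p₂ (ev.app Θ) (Key.map (projD Θ Υ)) →
      ∀ γ : Dec.obj (extD Θ Υ) ⟶ Pb,
        γ ≫ p₁ = Dec.map (projD Θ Υ) → γ ≫ p₂ = ev.app (extD Θ Υ) →
        ∃ (eA : Dec.obj (extD Θ Υ) ≅ extS (extS (Dec.obj Θ) (evTel Υ)) (dTel Υ))
          (eB : Pb ≅ extS (Dec.obj Θ) (evTel Υ)),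
          eA.hom ≫ projS _ (dTel Υ) = γ ≫ eB.hom := by
  intro Θ Υ Pb p₁ p₂ hPb γ hγ₁ hγ₂
  -- turn the given pullback into one over the cospan `(projS (keyTel Υ), ev.app Θ)`
  have h1 : IsPullback (p₂ ≫ eqToHom (hKeyObj Θ Υ)) p₁
      (projS _ (keyTel Υ)) (ev.app Θ) :=
    hPb.flip.of_iso (Iso.refl _) (eqToIso (hKeyObj Θ Υ)) (Iso.refl _) (Iso.refl _)
      (by simp) (by simp) (by simp [hKeyMap Θ Υ]) (by simp)
  refine ⟨eqToIso (hDecObj Θ Υ), h1.isoIsPullback _ _ (hsq Θ Υ), ?_⟩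
  apply (hsq Θ Υ).hom_ext
  · rw [Category.assoc, Category.assoc, IsPullback.isoIsPullback_hom_fst]
    conv_rhs => rw [← Category.assoc, hγ₂, hEv Θ Υ]
    simp
  · rw [Category.assoc, Category.assoc, IsPullback.isoIsPullback_hom_snd]
    conv_rhs => rw [hγ₁, hDecMap Θ Υ]
    simp
end
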